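/- arXiv:0806.3134 — 10 statements merged into one kernel-verified Lean document; each statement's English description precedes it below -/
import Mathlib

section
/- For a real vector z ∈ ℝ^M, the sum of pairwise absolute differences ∑_{1≤i<j≤M} |z_i − z_j| equals 2·∑_{k=2}^{M} θ_k − (M−1)·∑_{i=1}^M z_i, where θ_k denotes the sum of the M−k+1 largest entries of z. -/
/-!
Sort `z` increasingly as `w = z ∘ σ`. By an exchange argument the largest sum of `M - k + 1`
entries is the sum of the top `M - k + 1` sorted entries, so `w j` occurs in exactly `j` of the
`θ k` (0-based `j`) and `∑ θ k = ∑ j * w j`. On the other side the pairwise sum is invariant under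
reordering, and for sorted entries `|w i - w j| = w j - w i` for `i < j`, so `w j` enters with
coefficient `j - (M - 1 - j)`.
-/

open Finset

theorem Finset.sum_le_sum_of_card_eq_of_forall_sdiff_le {ι : Type*} [DecidableEq ι]
    {w : ι → ℝ} {S T : Finset ι} (hcard : #S = #T)
    (hle : ∀ i ∈ S \ T, ∀ j ∈ T \ S, w i ≤ w j) : ∑ i ∈ S, w i ≤ ∑ i ∈ T, w i := by
  have hcard' : #(S \ T) = #(T \ S) := card_sdiff_comm hcard
  suffices ∑ i ∈ S \ T, w i ≤ ∑ i ∈ T \ S, w i by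
    rw [← sum_inter_add_sum_sdiff S T, ← sum_inter_add_sum_sdiff T S, inter_comm]
    gcongr
  rcases (T \ S).eq_empty_or_nonempty with hTS | hTS
  · rw [hTS, card_empty, card_eq_zero] at hcard'
    simp [hTS, hcard']
  obtain ⟨b, hb, hbmin⟩ := exists_min_image (T \ S) w hTS
  calc ∑ i ∈ S \ T, w i ≤ #(S \ T) • w b := sum_le_card_nsmul _ _ _ fun i hi ↦ hle i hi b hb
    _ = #(T \ S) • w b := by rw [hcard']
    _ ≤ ∑ i ∈ T \ S, w i := card_nsmul_le_sum _ _ _ hbmin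

theorem Monotone.sum_le_sum_Ici {ι : Type*} [LinearOrder ι] [LocallyFiniteOrderTop ι]
    {w : ι → ℝ} (hw : Monotone w) (a : ι) {S : Finset ι} (hS : #S = #(Ici a)) :
    ∑ i ∈ S, w i ≤ ∑ i ∈ Ici a, w i := by
  refine sum_le_sum_of_card_eq_of_forall_sdiff_le hS fun i hi j hj ↦ hw ?_
  simp only [mem_sdiff, mem_Ici, not_le] at hi hj
  exact hi.2.le.trans hj.1

theorem isGreatest_sum_card_eq_Ici {M : ℕ} {z : Fin M → ℝ} {σ : Equiv.Perm (Fin M)}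
    (hσ : Monotone (z ∘ σ)) (a : Fin M) :
    IsGreatest {v : ℝ | ∃ S : Finset (Fin M), #S = #(Ici a) ∧ v = ∑ i ∈ S, z i}
      (∑ j ∈ Ici a, z (σ j)) := by
  refine ⟨⟨(Ici a).map σ.toEmbedding, card_map _, by rw [sum_map]; rfl⟩, ?_⟩
  rintro _ ⟨S, hS, rfl⟩
  have hpull : ∑ i ∈ S, z i = ∑ j ∈ S.map σ.symm.toEmbedding, z (σ j) := by simp [sum_map]
  exact hpull ▸ hσ.sum_le_sum_Ici a (by rwa [card_map])

theorem sum_Icc_sum_filter_le_succ {M : ℕ} (w : Fin M → ℝ) :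
    ∑ k ∈ Icc 2 M, ∑ j with k ≤ j.val + 1, w j = ∑ j : Fin M, (j : ℝ) * w j := by
  rw [sum_comm' (t' := univ) (s' := fun j : Fin M ↦ Icc 2 (j.val + 1))]
  · simp [Nat.card_Icc]
  · intro k j
    simp only [mem_Icc, mem_filter, mem_univ, true_and, and_true]
    have := j.isLt
    omega

theorem Finset.two_mul_sum_filter_lt {ι : Type*} [LinearOrder ι] [Fintype ι] (f : ι → ι → ℝ)
    (hsymm : ∀ i j, f i j = f j i) (hdiag : ∀ i, f i i = 0) :
    2 * ∑ p ∈ univ.filter (fun p : ι × ι => p.1 < p.2), f p.1 p.2 = ∑ p : ι × ι, f p.1 p.2 := by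
  have hgt : ∑ p ∈ univ.filter (fun p : ι × ι => p.2 < p.1), f p.1 p.2 =
      ∑ p ∈ univ.filter (fun p : ι × ι => p.1 < p.2), f p.1 p.2 :=
    sum_equiv (Equiv.prodComm ι ι) (by simp) (fun p _ ↦ hsymm _ _)
  have hsplit : ∀ p : ι × ι, f p.1 p.2 =
      (if p.1 < p.2 then f p.1 p.2 else 0) + (if p.2 < p.1 then f p.1 p.2 else 0) := by
    rintro ⟨i, j⟩
    rcases lt_trichotomy i j with h | rfl | h
    · simp [h, h.not_gt]
    · simp [hdiag]
    · simp [h, h.not_gt]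
  rw [Fintype.sum_congr _ _ hsplit, sum_add_distrib, ← sum_filter, ← sum_filter, hgt, two_mul]

theorem Finset.sum_filter_lt_comp_perm {ι : Type*} [LinearOrder ι] [Fintype ι]
    (f : ι → ι → ℝ) (hsymm : ∀ i j, f i j = f j i) (hdiag : ∀ i, f i i = 0) (σ : Equiv.Perm ι) :
    ∑ p ∈ univ.filter (fun p : ι × ι => p.1 < p.2), f (σ p.1) (σ p.2) =
      ∑ p ∈ univ.filter (fun p : ι × ι => p.1 < p.2), f p.1 p.2 := by
  have hperm := two_mul_sum_filter_lt (fun i j ↦ f (σ i) (σ j)) (fun i j ↦ hsymm _ _)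
    (fun i ↦ hdiag _)
  have hid := two_mul_sum_filter_lt f hsymm hdiag
  have hfull : ∑ p : ι × ι, f (σ p.1) (σ p.2) = ∑ p : ι × ι, f p.1 p.2 :=
    Equiv.sum_comp (σ.prodCongr σ) (fun p ↦ f p.1 p.2)
  linarith

theorem Monotone.sum_filter_lt_abs_sub {M : ℕ} {w : Fin M → ℝ} (hw : Monotone w) :
    ∑ p ∈ univ.filter (fun p : Fin M × Fin M => p.1 < p.2), |w p.1 - w p.2| =
      ∑ j : Fin M, (2 * (j : ℝ) - (M - 1)) * w j := by
  have habs : ∀ p ∈ univ.filter (fun p : Fin M × Fin M => p.1 < p.2),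
      |w p.1 - w p.2| = w p.2 - w p.1 := fun p hp ↦ by
    rw [abs_sub_comm, abs_of_nonneg (sub_nonneg.mpr (hw (mem_filter.mp hp).2.le))]
  have hsnd : ∑ p ∈ univ.filter (fun p : Fin M × Fin M => p.1 < p.2), w p.2 =
      ∑ j : Fin M, (j : ℝ) * w j := by
    rw [sum_filter, Fintype.sum_prod_type, sum_comm]
    simp [← sum_filter, filter_gt_eq_Iio, Fin.card_Iio]
  have hfst : ∑ p ∈ univ.filter (fun p : Fin M × Fin M => p.1 < p.2), w p.1 =
      ∑ i : Fin M, ((M : ℝ) - 1 - i) * w i := by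
    rw [sum_filter, Fintype.sum_prod_type]
    refine sum_congr rfl fun i _ ↦ ?_
    rw [← sum_filter, filter_lt_eq_Ioi]
    simp only [sum_const, Fin.card_Ioi, nsmul_eq_mul, Nat.sub_sub]
    rw [Nat.cast_sub (by omega)]
    push_cast
    ring
  rw [sum_congr rfl habs, sum_sub_distrib, hsnd, hfst, ← sum_sub_distrib]
  exact sum_congr rfl fun j _ ↦ by ring

theorem stmt_1_general (M : ℕ) (z : Fin M → ℝ) (θ : ℕ → ℝ)
    (hθ : ∀ k ∈ Finset.Icc 2 M,
      IsGreatest {v : ℝ | ∃ S : Finset (Fin M), S.card = M - k + 1 ∧ v = ∑ i ∈ S, z i} (θ k)) :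
    ∑ p ∈ Finset.univ.filter (fun p : Fin M × Fin M => p.1 < p.2), |z p.1 - z p.2| =
      2 * ∑ k ∈ Finset.Icc 2 M, θ k - ((M : ℝ) - 1) * ∑ i : Fin M, z i := by
  set σ := Tuple.sort z
  set w : Fin M → ℝ := fun j ↦ z (σ j)
  have hw : Monotone w := Tuple.monotone_sort z
  have hθw : ∀ k ∈ Icc 2 M, θ k = ∑ j with k ≤ j.val + 1, w j := by
    intro k hk
    obtain ⟨hk2, hkM⟩ := mem_Icc.mp hk
    have htop : univ.filter (fun j : Fin M ↦ k ≤ j.val + 1) = Ici ⟨k - 1, by omega⟩ := by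
      ext j
      simp only [mem_filter, mem_univ, true_and, mem_Ici, Fin.le_def]
      omega
    have hcard : #(Ici (⟨k - 1, by omega⟩ : Fin M)) = M - k + 1 := by simp; omega
    rw [htop]
    exact (hθ k hk).unique (hcard ▸ isGreatest_sum_card_eq_Ici hw _)
  rw [sum_congr rfl hθw, sum_Icc_sum_filter_le_succ w,
    ← sum_filter_lt_comp_perm (fun a b ↦ |z a - z b|) (fun a b ↦ abs_sub_comm _ _) (by simp) σ,
    hw.sum_filter_lt_abs_sub, ← Equiv.sum_comp σ z, mul_sum, mul_sum, ← sum_sub_distrib]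
  exact sum_congr rfl fun j _ ↦ by ring

/-- For `z ∈ ℝ^M` (`M ≥ 2`), the sum of pairwise absolute differences equals
`2 ∑_{k=2}^M θ_k - (M-1) ∑_i z_i`, where `θ_k` is the sum of the `M-k+1` largest entries
of `z`, characterized as the maximum subset sum over subsets of cardinality `M-k+1`. -/
theorem stmt_1 (M : ℕ) (hM : 2 ≤ M) (z : Fin M → ℝ) (θ : ℕ → ℝ)
    (hθ : ∀ k ∈ Finset.Icc 2 M,
      IsGreatest {v : ℝ | ∃ S : Finset (Fin M), S.card = M - k + 1 ∧ v = ∑ i ∈ S, z i} (θ k)) :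
    ∑ p ∈ Finset.univ.filter (fun p : Fin M × Fin M => p.1 < p.2), |z p.1 - z p.2| =
      2 * ∑ k ∈ Finset.Icc 2 M, θ k - ((M : ℝ) - 1) * ∑ i : Fin M, z i :=
  stmt_1_general M z θ hθ
end

section
/- For a real vector z ∈ ℝ^M and any integer q with 1 ≤ q ≤ M, the sum of the q largest entries of z equals the minimum over t ∈ ℝ of q·t + ∑_{i=1}^M max(z_i − t, 0), and the minimum is attained at t equal to the q-th largest entry of z. -/
/-!
For every threshold `t`, each of the `q` largest entries is at most `t` plus its excess
`max (w i - t) 0`, and the excesses of all entries are nonnegative; this gives the lower bound.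
At `t = w (q - 1)` the excess is positive exactly on the `q` largest entries and vanishes
elsewhere, so the bound is an equality there.
-/

open Finset

section Threshold

variable {ι α : Type*} [Fintype ι] [AddCommGroup α] [LinearOrder α] [IsOrderedAddMonoid α]

theorem Finset.sum_le_card_nsmul_add_sum_max_sub (s : Finset ι) (f : ι → α) (t : α) :
    ∑ i ∈ s, f i ≤ #s • t + ∑ i, max (f i - t) 0 :=
  calc ∑ i ∈ s, f i
      ≤ ∑ i ∈ s, (t + max (f i - t) 0) :=
        sum_le_sum fun i _ => sub_le_iff_le_add'.mp (le_max_left _ _)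
    _ = #s • t + ∑ i ∈ s, max (f i - t) 0 := by rw [sum_add_distrib, sum_const]
    _ ≤ #s • t + ∑ i, max (f i - t) 0 := by
        gcongr
        · exact fun i _ _ => le_max_right _ _
        · exact subset_univ s

theorem Finset.sum_max_sub_eq_sum_sub_card_nsmul (s : Finset ι) (f : ι → α) (t : α)
    (hs : ∀ i ∈ s, t ≤ f i) (hsc : ∀ i ∉ s, f i ≤ t) :
    ∑ i, max (f i - t) 0 = ∑ i ∈ s, f i - #s • t := by
  have hout : ∀ i ∈ univ, i ∉ s → max (f i - t) 0 = 0 := fun i _ hi =>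
    max_eq_right (sub_nonpos.mpr (hsc i hi))
  rw [← sum_subset (subset_univ s) hout, ← sum_const, ← sum_sub_distrib]
  exact sum_congr rfl fun i hi => max_eq_left (sub_nonneg.mpr (hs i hi))

end Threshold

/-- Indexing is from `0`: the `q` largest entries are `w 0, …, w (q - 1)`. -/
theorem stmt_2 (M : ℕ) (z w : Fin M → ℝ) (σ : Equiv.Perm (Fin M))
    (hw : w = z ∘ σ) (hanti : Antitone w) (q : ℕ) (hq1 : 1 ≤ q) (hqM : q ≤ M) :
    (∀ t : ℝ,
      ∑ i ∈ Finset.univ.filter (fun i : Fin M => (i : ℕ) < q), w i ≤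
        q * t + ∑ i : Fin M, max (z i - t) 0) ∧
    ∑ i ∈ Finset.univ.filter (fun i : Fin M => (i : ℕ) < q), w i =
      q * w ⟨q - 1, by omega⟩ + ∑ i : Fin M, max (z i - w ⟨q - 1, by omega⟩) 0 := by
  have hexcess (t : ℝ) : ∑ i, max (z i - t) 0 = ∑ i, max (w i - t) 0 := by
    rw [hw]
    exact (Equiv.sum_comp σ fun i => max (z i - t) 0).symm
  have hcard : #{i : Fin M | (i : ℕ) < q} = q := by
    rw [Fin.card_filter_val_lt, min_eq_right hqM]
  have htop : ∀ i ∈ ({i : Fin M | (i : ℕ) < q} : Finset _), w ⟨q - 1, by omega⟩ ≤ w i :=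
    fun i hi => hanti (show (i : ℕ) ≤ q - 1 by have := (mem_filter.mp hi).2; omega)
  have hrest : ∀ i ∉ ({i : Fin M | (i : ℕ) < q} : Finset _), w i ≤ w ⟨q - 1, by omega⟩ :=
    fun i hi => hanti (show q - 1 ≤ (i : ℕ) by
      simp only [mem_filter, mem_univ, true_and] at hi
      omega)
  refine ⟨fun t => ?_, ?_⟩
  · simpa [hexcess, hcard] using sum_le_card_nsmul_add_sum_max_sub {i : Fin M | (i : ℕ) < q} w t
  · rw [hexcess, sum_max_sub_eq_sum_sub_card_nsmul _ w _ htop hrest, hcard, nsmul_eq_mul]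
    ring
end

section
/- Let O : A × A → {1,…,M} be such that for each customer i, the map j ↦ O_{ij} is a bijection from A = {1,…,M} to {1,…,M} (a preference ranking). Let y ∈ {0,1}^M with ∑_{j=1}^M y_j = p, where 1 ≤ p ≤ M, and let z ∈ ℝ^M. Suppose z satisfies, for all i ∈ A and k = 1,…,M−p+1: z_i + ∑_{ℓ : O_{iℓ} ≤ k−1} (k − O_{iℓ}) y_ℓ ≥ k, and for all i,k ∈ A with O_{ik} ≤ M−p+1: z_i + (M−p+1−O_{ik}) y_k ≤ M−p+1. Then z_i = min { O_{ij} : y_j = 1 } for every i ∈ A. -/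
/-!
Fix a customer and let `m` be the best rank of an open facility. The `p` open facilities
have distinct ranks in `[m, M]`, so `m ≤ M - p + 1` and both constraint families apply
at `m`: the lower constraint with `k = m` has an empty sum, since no facility ranked
below `m` is open, so `m ≤ z`; the upper constraint at the facility of rank `m` gives `z ≤ m`.
-/

open Finset

theorem Finset.min'_add_card_le {S : Finset ℕ} (hS : S.Nonempty) {M : ℕ}
    (hM : ∀ n ∈ S, n ≤ M) : S.min' hS + #S ≤ M + 1 := by
  have hsub : S ⊆ Icc (S.min' hS) M := fun n hn => mem_Icc.2 ⟨S.min'_le n hn, hM n hn⟩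
  have := card_le_card hsub
  have := hM _ (S.min'_mem hS)
  rw [Nat.card_Icc] at *
  omega

section OpenRanks

variable {ι : Type*} [Fintype ι] (r : ι → ℕ) (y : ι → ℕ)

def openRanks : Finset ℕ := (univ.filter (y · = 1)).image r

variable {r y}

theorem coe_openRanks : (openRanks r y : Set ℕ) = {n | ∃ j, y j = 1 ∧ r j = n} := by
  ext n
  simp [openRanks]

theorem mem_openRanks_of_eq_one {j : ι} (hj : y j = 1) : r j ∈ openRanks r y :=
  mem_image_of_mem r (mem_filter.2 ⟨mem_univ j, hj⟩)

theorem card_openRanks (hr : Function.Injective r) (hy01 : ∀ j, y j = 0 ∨ y j = 1) :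
    #(openRanks r y) = ∑ j, y j := by
  have hy : ∀ j, y j = if y j = 1 then 1 else 0 := fun j => by
    rcases hy01 j with h | h <;> simp [h]
  rw [openRanks, card_image_of_injective _ hr, sum_congr rfl fun j _ => hy j, sum_boole]
  simp

end OpenRanks

theorem le_of_le_add_sum_of_eq_zero_below {ι : Type*} [Fintype ι] {r y : ι → ℕ} {z : ℝ}
    {k : ℕ} (hk1 : 1 ≤ k) (hbelow : ∀ ℓ, r ℓ < k → y ℓ = 0)
    (h : (k : ℝ) ≤ z + ∑ ℓ ∈ univ.filter (fun ℓ => r ℓ ≤ k - 1), ((k : ℝ) - r ℓ) * y ℓ) :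
    (k : ℝ) ≤ z := by
  have hsum : ∑ ℓ ∈ univ.filter (fun ℓ => r ℓ ≤ k - 1), ((k : ℝ) - r ℓ) * y ℓ = 0 := by
    refine sum_eq_zero fun ℓ hℓ => ?_
    rw [hbelow ℓ (by have := (mem_filter.1 hℓ).2; omega), Nat.cast_zero, mul_zero]
  rwa [hsum, add_zero] at h

theorem stmt_6_general (M p : ℕ) (hp1 : 1 ≤ p)
    (O : Fin M → Fin M → ℕ)
    (hO : ∀ i, Set.BijOn (O i) Set.univ (Set.Icc 1 M))
    (y : Fin M → ℕ) (hy01 : ∀ j, y j = 0 ∨ y j = 1)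
    (hyp : ∑ j : Fin M, y j = p)
    (z : Fin M → ℝ)
    (hge : ∀ i : Fin M, ∀ k ∈ Finset.Icc 1 (M - p + 1),
      (k : ℝ) ≤ z i + ∑ ℓ ∈ Finset.univ.filter (fun ℓ : Fin M => O i ℓ ≤ k - 1),
        ((k : ℝ) - O i ℓ) * y ℓ)
    (hle : ∀ i k : Fin M, O i k ≤ M - p + 1 →
      z i + ((M : ℝ) - p + 1 - O i k) * y k ≤ (M : ℝ) - p + 1) :
    ∀ i : Fin M, z i = ((sInf {r : ℕ | ∃ j, y j = 1 ∧ O i j = r} : ℕ) : ℝ) := by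
  intro i
  have hrank : ∀ j, O i j ∈ Set.Icc 1 M := fun j => (hO i).mapsTo (Set.mem_univ j)
  set S := openRanks (O i) y
  have hcard : #S = p := by rw [card_openRanks (Set.injOn_univ.1 (hO i).injOn) hy01, hyp]
  have hS : S.Nonempty := card_pos.1 (by omega)
  have hmp : S.min' hS + p ≤ M + 1 := hcard ▸ S.min'_add_card_le hS fun n hn => by
    obtain ⟨j, -, rfl⟩ := mem_image.1 hn
    exact (hrank j).2
  obtain ⟨j, hj, hjm⟩ := mem_image.1 (S.min'_mem hS)
  rw [← coe_openRanks, hS.csInf_eq_min', ← hjm]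
  apply le_antisymm
  · have := hle i j (by omega)
    rw [(mem_filter.1 hj).2, Nat.cast_one, mul_one] at this
    linarith
  · refine le_of_le_add_sum_of_eq_zero_below (hrank j).1 (fun ℓ hℓ => ?_) (hge i _ ?_)
    · exact (hy01 ℓ).resolve_right fun h1 => by
        have := S.min'_le _ (mem_openRanks_of_eq_one (r := O i) h1)
        omega
    · exact mem_Icc.2 ⟨(hrank j).1, by omega⟩

/-- Closest-assignment constraints: if the preference ranks `O i : A → {1,…,M}` are
bijections, `y` is a 0-1 vector with `p` ones, and `z` satisfies the two families of
closest-assignment constraints, then `z_i = min {O_{ij} : y_j = 1}` for every `i`. -/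
theorem stmt_6 (M p : ℕ) (hp1 : 1 ≤ p) (hpM : p ≤ M)
    (O : Fin M → Fin M → ℕ)
    (hO : ∀ i, Set.BijOn (O i) Set.univ (Set.Icc 1 M))
    (y : Fin M → ℕ) (hy01 : ∀ j, y j = 0 ∨ y j = 1)
    (hyp : ∑ j : Fin M, y j = p)
    (z : Fin M → ℝ)
    (hge : ∀ i : Fin M, ∀ k ∈ Finset.Icc 1 (M - p + 1),
      (k : ℝ) ≤ z i + ∑ ℓ ∈ Finset.univ.filter (fun ℓ : Fin M => O i ℓ ≤ k - 1),
        ((k : ℝ) - O i ℓ) * y ℓ)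
    (hle : ∀ i k : Fin M, O i k ≤ M - p + 1 →
      z i + ((M : ℝ) - p + 1 - O i k) * y k ≤ (M : ℝ) - p + 1) :
    ∀ i : Fin M, z i = ((sInf {r : ℕ | ∃ j, y j = 1 ∧ O i j = r} : ℕ) : ℝ) :=
  stmt_6_general M p hp1 O hO y hy01 hyp z hge hle
end

section
/- Let O_{i·} : A → {1,…,M} be a bijection for each i ∈ A = {1,…,M}, let y ∈ {0,1}^M with ∑_j y_j = p, and define z_i = min{O_{ij} : y_j = 1} and z_{ik} = 1 if z_i ≥ k and 0 otherwise, for k = 2,…,M−p+1. Then for every i ∈ A and k = 2,…,M−p: p · z_{ik} ≤ ∑_{j : O_{ij} ≥ k} y_j. -/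
theorem sum_filter_le_eq_sum_of_le_sInf {ι : Type*} [Fintype ι] {O y : ι → ℕ}
    (hy01 : ∀ j, y j = 0 ∨ y j = 1) {k : ℕ}
    (hk : k ≤ sInf {r : ℕ | ∃ j, y j = 1 ∧ O j = r}) :
    ∑ j ∈ Finset.univ.filter (fun j => k ≤ O j), y j = ∑ j, y j :=
  Finset.sum_filter_of_ne fun j _ hj =>
    hk.trans (Nat.sInf_le ⟨j, (hy01 j).resolve_left hj, rfl⟩)

theorem stmt_7_general (M p : ℕ)
    (O : Fin M → Fin M → ℕ)
    (y : Fin M → ℕ) (hy01 : ∀ j, y j = 0 ∨ y j = 1)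
    (hyp : ∑ j : Fin M, y j = p)
    (z : Fin M → ℕ) (hz : ∀ i, z i = sInf {r : ℕ | ∃ j, y j = 1 ∧ O i j = r})
    (ζ : Fin M → ℕ → ℕ) (hζ : ∀ i k, ζ i k = if k ≤ z i then 1 else 0) :
    ∀ i : Fin M, ∀ k ∈ Finset.Icc 2 (M - p),
      p * ζ i k ≤ ∑ j ∈ Finset.univ.filter (fun j : Fin M => k ≤ O i j), y j := by
  intro i k _
  rw [hζ]
  split_ifs with hkz
  · rw [hz] at hkz
    rw [mul_one, sum_filter_le_eq_sum_of_le_sInf hy01 hkz, hyp]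
  · simp

/-- Validity of inequality (p102) for formulation (F2): with `z_i` the rank of the best
open facility for customer `i` and `ζ i k` the indicator of `z_i ≥ k`, we have
`p · ζ_{ik} ≤ ∑_{j : O_{ij} ≥ k} y_j` for all `i` and `k = 2,…,M-p`. -/
theorem stmt_7 (M p : ℕ) (hp1 : 1 ≤ p) (hpM : p ≤ M)
    (O : Fin M → Fin M → ℕ)
    (hO : ∀ i, Set.BijOn (O i) Set.univ (Set.Icc 1 M))
    (y : Fin M → ℕ) (hy01 : ∀ j, y j = 0 ∨ y j = 1)
    (hyp : ∑ j : Fin M, y j = p)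
    (z : Fin M → ℕ) (hz : ∀ i, z i = sInf {r : ℕ | ∃ j, y j = 1 ∧ O i j = r})
    (ζ : Fin M → ℕ → ℕ) (hζ : ∀ i k, ζ i k = if k ≤ z i then 1 else 0) :
    ∀ i : Fin M, ∀ k ∈ Finset.Icc 2 (M - p),
      p * ζ i k ≤ ∑ j ∈ Finset.univ.filter (fun j : Fin M => k ≤ O i j), y j :=
  stmt_7_general M p O y hy01 hyp z hz ζ hζ
end

section
/- Let O_{i·} : A → {1,…,M} be a bijection for each i ∈ A = {1,…,M}, let y ∈ {0,1}^M with ∑_j y_j = p ≥ 1, and define z_i = min{O_{ij} : y_j = 1} and z_{ik} = 1 if z_i ≥ k and 0 otherwise. Then for every i ∈ A and k = 2,…,M−p: (p−1)·(z_{ik} − z_{i,k+1}) ≤ ∑_{j : O_{ij} ≥ k+1} y_j. -/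
/-! If the best open facility of customer `i` has rank `k`, it is the only open facility of rank
at most `k` (ranks are injective and every open facility has rank `≥ k`), so the other `p - 1`
open facilities all have rank `≥ k + 1`. Otherwise `ζ i k = ζ i (k + 1)` and the inequality is
`0 ≤ ∑ y`. -/

open Finset

section BestRank

variable {ι : Type*} {y : ι → ℕ} {O : ι → ℕ} {k : ℕ}

theorem le_rank_of_sInf_eq (hk : sInf {r : ℕ | ∃ j, y j = 1 ∧ O j = r} = k) {j : ι}
    (hj : y j = 1) : k ≤ O j :=
  hk ▸ Nat.sInf_le ⟨j, hj, rfl⟩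

/-- The junk value `sInf ∅ = 0` is ruled out by `k ≠ 0`. -/
theorem exists_rank_eq_of_sInf_eq (hk : sInf {r : ℕ | ∃ j, y j = 1 ∧ O j = r} = k)
    (hk0 : k ≠ 0) : ∃ j, y j = 1 ∧ O j = k := by
  have hne : {r : ℕ | ∃ j, y j = 1 ∧ O j = r}.Nonempty := by
    by_contra hempty
    exact hk0 (hk ▸ Nat.sInf_eq_zero.mpr (.inr (Set.not_nonempty_iff_eq_empty.mp hempty)))
  exact hk ▸ Nat.sInf_mem hne

theorem sum_filter_rank_le_eq_one [Fintype ι] (hy01 : ∀ j, y j = 0 ∨ y j = 1) (hO : Function.Injective O)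
    (hk : sInf {r : ℕ | ∃ j, y j = 1 ∧ O j = r} = k) (hk0 : k ≠ 0) :
    ∑ j with ¬ k + 1 ≤ O j, y j = 1 := by
  obtain ⟨j₀, hj₀, hOj₀⟩ := exists_rank_eq_of_sInf_eq hk hk0
  rw [sum_eq_single_of_mem j₀ (by simp [hOj₀]) ?_, hj₀]
  intro j hj hne
  simp only [mem_filter, mem_univ, true_and, not_le] at hj
  refine (hy01 j).resolve_right fun hj1 => hne (hO ?_)
  have := le_rank_of_sInf_eq hk hj1
  omega

theorem sum_filter_lt_rank_eq_sub_one [Fintype ι] (hy01 : ∀ j, y j = 0 ∨ y j = 1)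
    (hO : Function.Injective O) (hk : sInf {r : ℕ | ∃ j, y j = 1 ∧ O j = r} = k) (hk0 : k ≠ 0) :
    ∑ j with k + 1 ≤ O j, (y j : ℤ) = (∑ j, y j : ℕ) - 1 := by
  have hsplit := sum_filter_add_sum_filter_not univ (fun j => k + 1 ≤ O j) y
  rw [sum_filter_rank_le_eq_one hy01 hO hk hk0] at hsplit
  rw [← hsplit]
  push_cast
  ring

end BestRank

theorem ite_le_sub_ite_succ_le (z k : ℕ) :
    ((if k ≤ z then 1 else 0 : ℕ) : ℤ) - ((if k + 1 ≤ z then 1 else 0 : ℕ) : ℤ) =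
      if z = k then 1 else 0 := by
  split_ifs <;> omega

theorem stmt_8_general (M p : ℕ)
    (O : Fin M → Fin M → ℕ)
    (hO : ∀ i, Set.BijOn (O i) Set.univ (Set.Icc 1 M))
    (y : Fin M → ℕ) (hy01 : ∀ j, y j = 0 ∨ y j = 1)
    (hyp : ∑ j : Fin M, y j = p)
    (z : Fin M → ℕ) (hz : ∀ i, z i = sInf {r : ℕ | ∃ j, y j = 1 ∧ O i j = r})
    (ζ : Fin M → ℕ → ℕ) (hζ : ∀ i k, ζ i k = if k ≤ z i then 1 else 0) :
    ∀ i : Fin M, ∀ k ∈ Finset.Icc 2 (M - p),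
      ((p : ℤ) - 1) * ((ζ i k : ℤ) - (ζ i (k + 1) : ℤ)) ≤
        ∑ j ∈ Finset.univ.filter (fun j : Fin M => k + 1 ≤ O i j), (y j : ℤ) := by
  intro i k hk
  rw [hζ, hζ, ite_le_sub_ite_succ_le]
  split_ifs with hzk
  · have hk0 : k ≠ 0 := by simp only [mem_Icc] at hk; omega
    rw [sum_filter_lt_rank_eq_sub_one hy01 (Set.injOn_univ.mp (hO i).injOn)
      ((hz i).symm.trans hzk) hk0, hyp, mul_one]
  · rw [mul_zero]
    exact sum_nonneg fun j _ => Int.natCast_nonneg _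

/-- Validity of inequality (p103) for formulation (F2):
`(p-1)·(ζ_{ik} - ζ_{i,k+1}) ≤ ∑_{j : O_{ij} ≥ k+1} y_j` for all `i` and `k = 2,…,M-p`. -/
theorem stmt_8 (M p : ℕ) (hp1 : 1 ≤ p) (hpM : p ≤ M)
    (O : Fin M → Fin M → ℕ)
    (hO : ∀ i, Set.BijOn (O i) Set.univ (Set.Icc 1 M))
    (y : Fin M → ℕ) (hy01 : ∀ j, y j = 0 ∨ y j = 1)
    (hyp : ∑ j : Fin M, y j = p)
    (z : Fin M → ℕ) (hz : ∀ i, z i = sInf {r : ℕ | ∃ j, y j = 1 ∧ O i j = r})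
    (ζ : Fin M → ℕ → ℕ) (hζ : ∀ i k, ζ i k = if k ≤ z i then 1 else 0) :
    ∀ i : Fin M, ∀ k ∈ Finset.Icc 2 (M - p),
      ((p : ℤ) - 1) * ((ζ i k : ℤ) - (ζ i (k + 1) : ℤ)) ≤
        ∑ j ∈ Finset.univ.filter (fun j : Fin M => k + 1 ≤ O i j), (y j : ℤ) :=
  stmt_8_general M p O hO y hy01 hyp z hz ζ hζ
end

section
/- Let O_{i·} : A → {1,…,M} be a bijection for each i ∈ A = {1,…,M}, let y ∈ {0,1}^M with ∑_j y_j = p ≥ 1, and define z_i = min{O_{ij} : y_j = 1} and z_{ik} = 1 if z_i ≥ k and 0 otherwise. Then for every i ∈ A and every k = 2,…,M−p+1: z_{ik} + ∑_{j : O_{ij} < k} y_j ≥ 1. -/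
open Finset

lemma exists_eq_one_of_sum_ne_zero {ι : Type*} [Fintype ι] {y : ι → ℕ}
    (hy01 : ∀ j, y j = 0 ∨ y j = 1) (hy : ∑ j, y j ≠ 0) : ∃ j, y j = 1 := by
  obtain ⟨j, -, hj⟩ := exists_ne_zero_of_sum_ne_zero hy
  exact ⟨j, (hy01 j).resolve_left hj⟩

lemma one_le_sum_filter_lt_of_eq_one {ι : Type*} [Fintype ι] {y f : ι → ℕ} {k : ℕ} {j : ι}
    (hj : y j = 1) (hjk : f j < k) : 1 ≤ ∑ j ∈ univ.filter (fun j => f j < k), y j :=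
  hj ▸ single_le_sum (fun _ _ => Nat.zero_le _) (mem_filter.mpr ⟨mem_univ j, hjk⟩)

theorem stmt_9_general (M p : ℕ) (hp1 : 1 ≤ p)
    (O : Fin M → Fin M → ℕ)
    (y : Fin M → ℕ) (hy01 : ∀ j, y j = 0 ∨ y j = 1)
    (hyp : ∑ j : Fin M, y j = p)
    (z : Fin M → ℕ) (hz : ∀ i, z i = sInf {r : ℕ | ∃ j, y j = 1 ∧ O i j = r})
    (ζ : Fin M → ℕ → ℕ) (hζ : ∀ i k, ζ i k = if k ≤ z i then 1 else 0) :
    ∀ i : Fin M, ∀ k ∈ Finset.Icc 2 (M - p + 1),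
      1 ≤ ζ i k + ∑ j ∈ Finset.univ.filter (fun j : Fin M => O i j < k), y j := by
  intro i k _
  rw [hζ]
  split_ifs with hk
  · omega
  -- Since `p ≥ 1` some facility is open, so the minimum `z i < k` is attained by an open `j₀`.
  · obtain ⟨j, hj⟩ := exists_eq_one_of_sum_ne_zero hy01 (by omega)
    obtain ⟨j₀, hj₀, hOj₀⟩ :=
      Nat.sInf_mem (s := {r : ℕ | ∃ j, y j = 1 ∧ O i j = r}) ⟨O i j, j, hj, rfl⟩
    rw [zero_add]
    exact one_le_sum_filter_lt_of_eq_one hj₀ (by rw [hOj₀, ← hz i]; omega)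

/-- Validity of inequality (p105) for formulation (F2):
`ζ_{ik} + ∑_{j : O_{ij} < k} y_j ≥ 1` for all `i` and `k = 2,…,M-p+1`. -/
theorem stmt_9 (M p : ℕ) (hp1 : 1 ≤ p) (hpM : p ≤ M)
    (O : Fin M → Fin M → ℕ)
    (hO : ∀ i, Set.BijOn (O i) Set.univ (Set.Icc 1 M))
    (y : Fin M → ℕ) (hy01 : ∀ j, y j = 0 ∨ y j = 1)
    (hyp : ∑ j : Fin M, y j = p)
    (z : Fin M → ℕ) (hz : ∀ i, z i = sInf {r : ℕ | ∃ j, y j = 1 ∧ O i j = r})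
    (ζ : Fin M → ℕ → ℕ) (hζ : ∀ i k, ζ i k = if k ≤ z i then 1 else 0) :
    ∀ i : Fin M, ∀ k ∈ Finset.Icc 2 (M - p + 1),
      1 ≤ ζ i k + ∑ j ∈ Finset.univ.filter (fun j : Fin M => O i j < k), y j :=
  stmt_9_general M p hp1 O y hy01 hyp z hz ζ hζ
end

section
/- Let O_{i·} : A → {1,…,M} be a bijection for each i ∈ A, let y ∈ {0,1}^M with ∑_j y_j = p, define z_i = min{O_{ij} : y_j = 1} and z_{ik} = 1 if z_i ≥ k and 0 else. Then z_{ik} ≥ z_{i,k+1} for all i and k = 2,…,M−p; moreover for all i,j with 2 ≤ O_{ij} ≤ M−p: z_{i,O_{ij}} − z_{i,O_{ij}+1} ≤ y_j, for all i,j with O_{ij} = 1: 1 − z_{i2} ≤ y_j, and for all i,j with O_{ij} ≤ M−p: z_{i,O_{ij}+1} + y_j ≤ 1. -/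
/-! The assigned rank `z i` is attained by an open facility (some `y j = 1`, which exists since
`p ≥ 1`), is at most the rank of every open facility, and, ranks being distinct, differs from the
rank of every closed one; it is also at least `1`. Each linking constraint then reduces to
comparing `z i` with `O i j` and `O i j + 1`. -/

lemma exists_eq_one_of_sum_pos {ι : Type*} {s : Finset ι} {y : ι → ℕ}
    (hy01 : ∀ j, y j = 0 ∨ y j = 1) (hpos : 0 < ∑ j ∈ s, y j) : ∃ j, y j = 1 := by
  obtain ⟨j, -, hj⟩ := Finset.exists_ne_zero_of_sum_ne_zero hpos.ne'
  exact ⟨j, (hy01 j).resolve_left hj⟩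

section AssignedRank

variable {ι : Type*} (r : ι → ℕ) (y : ι → ℕ)

lemma exists_rank_eq_sInf (hopen : ∃ j, y j = 1) :
    ∃ j, y j = 1 ∧ r j = sInf {n | ∃ j, y j = 1 ∧ r j = n} :=
  Nat.sInf_mem (s := {n | ∃ j, y j = 1 ∧ r j = n}) <|
    let ⟨j, hj⟩ := hopen; ⟨r j, j, hj, rfl⟩

variable {r y}

lemma sInf_le_rank {j : ι} (hj : y j = 1) : sInf {n | ∃ j, y j = 1 ∧ r j = n} ≤ r j :=
  Nat.sInf_le ⟨j, hj, rfl⟩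

lemma sInf_ne_rank (hr : Function.Injective r) (hopen : ∃ j, y j = 1) {j : ι} (hj : y j ≠ 1) :
    sInf {n | ∃ j, y j = 1 ∧ r j = n} ≠ r j := by
  obtain ⟨j', hj', hr'⟩ := exists_rank_eq_sInf r y hopen
  rintro h
  exact hj (hr (hr'.trans h) ▸ hj')

end AssignedRank

theorem stmt_10_general (M p : ℕ) (hp1 : 1 ≤ p)
    (O : Fin M → Fin M → ℕ)
    (hO : ∀ i, Set.BijOn (O i) Set.univ (Set.Icc 1 M))
    (y : Fin M → ℕ) (hy01 : ∀ j, y j = 0 ∨ y j = 1)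
    (hyp : ∑ j : Fin M, y j = p)
    (z : Fin M → ℕ) (hz : ∀ i, z i = sInf {r : ℕ | ∃ j, y j = 1 ∧ O i j = r})
    (ζ : Fin M → ℕ → ℕ) (hζ : ∀ i k, ζ i k = if k ≤ z i then 1 else 0) :
    (∀ i : Fin M, ∀ k ∈ Finset.Icc 2 (M - p), ζ i (k + 1) ≤ ζ i k) ∧
    (∀ i j : Fin M, 2 ≤ O i j → O i j ≤ M - p →
      (ζ i (O i j) : ℤ) - (ζ i (O i j + 1) : ℤ) ≤ (y j : ℤ)) ∧
    (∀ i j : Fin M, O i j = 1 → (1 : ℤ) - (ζ i 2 : ℤ) ≤ (y j : ℤ)) ∧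
    (∀ i j : Fin M, O i j ≤ M - p → ζ i (O i j + 1) + y j ≤ 1) := by
  have hopen : ∃ j, y j = 1 := exists_eq_one_of_sum_pos hy01 (by rw [hyp]; omega)
  have hz_pos (i) : 1 ≤ z i := by
    obtain ⟨j, -, hj⟩ := exists_rank_eq_sInf (O i) y hopen
    exact hz i ▸ hj ▸ ((hO i).mapsTo trivial).1
  have hz_le (i j) (hj : y j = 1) : z i ≤ O i j := hz i ▸ sInf_le_rank hj
  have hz_ne (i j) (hj : y j = 0) : z i ≠ O i j :=
    hz i ▸ sInf_ne_rank (Set.injOn_univ.1 (hO i).injOn) hopen (by omega)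
  refine ⟨fun i k _ => ?_, fun i j _ _ => ?_, fun i j _ => ?_, fun i j _ => ?_⟩
  · simp only [hζ]
    split_ifs <;> omega
  all_goals
    have := hz_pos i
    rcases hy01 j with hj | hj
    · have := hz_ne i j hj
      simp only [hζ, hj]
      split_ifs <;> omega
    · have := hz_le i j hj
      simp only [hζ, hj]
      split_ifs <;> omega

/-- Core linking constraints of formulation (F2): the step variables
`ζ i k = [z_i ≥ k]` are consistent with the open-facility indicators `y`. -/
theorem stmt_10 (M p : ℕ) (hp1 : 1 ≤ p) (hpM : p ≤ M)
    (O : Fin M → Fin M → ℕ)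
    (hO : ∀ i, Set.BijOn (O i) Set.univ (Set.Icc 1 M))
    (y : Fin M → ℕ) (hy01 : ∀ j, y j = 0 ∨ y j = 1)
    (hyp : ∑ j : Fin M, y j = p)
    (z : Fin M → ℕ) (hz : ∀ i, z i = sInf {r : ℕ | ∃ j, y j = 1 ∧ O i j = r})
    (ζ : Fin M → ℕ → ℕ) (hζ : ∀ i k, ζ i k = if k ≤ z i then 1 else 0) :
    (∀ i : Fin M, ∀ k ∈ Finset.Icc 2 (M - p), ζ i (k + 1) ≤ ζ i k) ∧
    (∀ i j : Fin M, 2 ≤ O i j → O i j ≤ M - p →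
      (ζ i (O i j) : ℤ) - (ζ i (O i j + 1) : ℤ) ≤ (y j : ℤ)) ∧
    (∀ i j : Fin M, O i j = 1 → (1 : ℤ) - (ζ i 2 : ℤ) ≤ (y j : ℤ)) ∧
    (∀ i j : Fin M, O i j ≤ M - p → ζ i (O i j + 1) + y j ≤ 1) :=
  stmt_10_general M p hp1 O hO y hy01 hyp z hz ζ hζ
end

section
/- Let ζ_{·k} ∈ {0,1}^M for k = 2,…,K be 0-1 columns, and let x_{·k} ∈ {0,1}^M be the non-decreasing rearrangement of ζ_{·k} for each k. If ζ_{ik} ≥ ζ_{i,k+1} for all i and k (each customer's step indicators are non-increasing in k), then the induced ranks z_i = 1 + ∑_{k=2}^K ζ_{ik} satisfy ∑_{1≤i<j≤M} |z_i − z_j| = ∑_{i=1}^M (2i − M − 1) ∑_{k=2}^K x_{ik}. -/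
open Finset

lemma sum_pairs {M : ℕ} (f : Fin M × Fin M → ℝ) (hsymm : ∀ q : Fin M × Fin M, f q.swap = f q)
    (hdiag : ∀ i, f (i, i) = 0) :
    ∑ q ∈ univ.filter (fun q : Fin M × Fin M => q.1 < q.2), f q
      = (∑ q : Fin M × Fin M, f q) / 2 := by
  have h1 : ∑ q ∈ univ.filter (fun q : Fin M × Fin M => ¬ q.1 < q.2), f q
      = ∑ q ∈ univ.filter (fun q : Fin M × Fin M => q.2 < q.1), f q := by
    rw [sum_filter, sum_filter]
    refine Finset.sum_congr rfl fun q _ => ?_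
    rcases lt_trichotomy q.1 q.2 with h | h | h
    · simp [h, not_lt.mpr h.le, asymm h]
    · have : f q = 0 := by
        have : q = (q.1, q.1) := by ext <;> simp [h.symm]
        rw [this, hdiag]
      simp [h, this]
    · simp [h, not_lt.mpr h.le]
  have h2 : ∑ q ∈ univ.filter (fun q : Fin M × Fin M => q.2 < q.1), f q
      = ∑ q ∈ univ.filter (fun q : Fin M × Fin M => q.1 < q.2), f q := by
    refine Finset.sum_nbij' (fun q => q.swap) (fun q => q.swap) ?_ ?_ ?_ ?_ ?_
    · simp
    · simp
    · simp
    · simp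
    · intro q hq; exact (hsymm q).symm
  have h3 := Finset.sum_filter_add_sum_filter_not univ
    (fun q : Fin M × Fin M => q.1 < q.2) f
  rw [h1, h2] at h3
  rw [eq_div_iff (two_ne_zero), mul_two]
  rw [← h3]

lemma mono_pairsum {M : ℕ} (w : Fin M → ℝ) (hw : Monotone w) :
    ∑ q ∈ univ.filter (fun q : Fin M × Fin M => q.1 < q.2), |w q.1 - w q.2|
      = ∑ i : Fin M, ((2 * ((i : ℕ) + 1) : ℝ) - M - 1) * w i := by
  have habs : ∀ q ∈ univ.filter (fun q : Fin M × Fin M => q.1 < q.2),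
      |w q.1 - w q.2| = w q.2 - w q.1 := by
    intro q hq
    rw [mem_filter] at hq
    rw [abs_sub_comm, abs_of_nonneg (sub_nonneg.mpr (hw hq.2.le))]
  rw [Finset.sum_congr rfl habs, Finset.sum_sub_distrib]
  have hA : ∑ q ∈ univ.filter (fun q : Fin M × Fin M => q.1 < q.2), w q.2
      = ∑ j : Fin M, (j : ℝ) * w j := by
    rw [sum_filter, Fintype.sum_prod_type, Finset.sum_comm]
    refine Finset.sum_congr rfl fun j _ => ?_
    have : (∑ i : Fin M, if (i, j).1 < (i, j).2 then w (i, j).2 else 0)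
        = ∑ i ∈ Finset.Iio j, w j := by
      rw [← Finset.sum_filter]
      apply Finset.sum_congr
      · ext i; simp
      · intros; rfl
    rw [this, Finset.sum_const, Fin.card_Iio, nsmul_eq_mul]
  have hB : ∑ q ∈ univ.filter (fun q : Fin M × Fin M => q.1 < q.2), w q.1
      = ∑ i : Fin M, ((M : ℝ) - 1 - i) * w i := by
    rw [sum_filter, Fintype.sum_prod_type]
    refine Finset.sum_congr rfl fun i _ => ?_
    have : (∑ j : Fin M, if (i, j).1 < (i, j).2 then w (i, j).1 else 0)
        = ∑ j ∈ Finset.Ioi i, w i := by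
      rw [← Finset.sum_filter]
      apply Finset.sum_congr
      · ext j; simp
      · intros; rfl
    rw [this, Finset.sum_const, Fin.card_Ioi, nsmul_eq_mul]
    congr 1
    have hi : (i : ℕ) + 1 ≤ M := i.isLt
    rw [Nat.cast_sub (by omega), Nat.cast_sub (by omega : 1 ≤ M)]
    push_cast
    ring
  rw [hA, hB, ← Finset.sum_sub_distrib]
  refine Finset.sum_congr rfl fun i _ => ?_
  ring

lemma abs_sum_sub (s : Finset ℕ) (a b : ℕ → ℝ)
    (h : (∀ k ∈ s, a k ≤ b k) ∨ (∀ k ∈ s, b k ≤ a k)) :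
    |∑ k ∈ s, a k - ∑ k ∈ s, b k| = ∑ k ∈ s, |a k - b k| := by
  rcases h with h | h
  · rw [← Finset.sum_sub_distrib,
      abs_of_nonpos (Finset.sum_nonpos fun k hk => sub_nonpos.mpr (h k hk)),
      ← Finset.sum_neg_distrib]
    refine Finset.sum_congr rfl fun k hk => ?_
    rw [abs_sub_comm, abs_of_nonneg (sub_nonneg.mpr (h k hk)), neg_sub]
  · rw [← Finset.sum_sub_distrib,
      abs_of_nonneg (Finset.sum_nonneg fun k hk => sub_nonneg.mpr (h k hk))]
    exact Finset.sum_congr rfl fun k hk => (abs_of_nonneg (sub_nonneg.mpr (h k hk))).symm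

/-- Column sorting for (F2): if `ζ_{·k}` (`k = 2,…,K`) are 0-1 columns, nested in the
sense `ζ_{ik} ≥ ζ_{i,k+1}`, and each `x_{·k}` is the non-decreasing rearrangement of
`ζ_{·k}`, then the induced ranks `z_i = 1 + ∑_{k=2}^K ζ_{ik}` satisfy
`∑_{i<j} |z_i - z_j| = ∑_i (2i - M - 1) ∑_{k=2}^K x_{ik}`. -/
theorem stmt_13 (M K : ℕ) (hM : 1 ≤ M) (hK : 2 ≤ K)
    (ζ : Fin M → ℕ → ℕ) (hζ01 : ∀ i, ∀ k ∈ Finset.Icc 2 K, ζ i k = 0 ∨ ζ i k = 1)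
    (hnest : ∀ i : Fin M, ∀ k ∈ Finset.Icc 2 (K - 1), ζ i (k + 1) ≤ ζ i k)
    (x : Fin M → ℕ → ℕ)
    (hx : ∀ k ∈ Finset.Icc 2 K,
      (∃ σ : Equiv.Perm (Fin M), (fun i => x i k) = fun i => ζ (σ i) k) ∧
      Monotone fun i => x i k)
    (z : Fin M → ℕ) (hz : ∀ i, z i = 1 + ∑ k ∈ Finset.Icc 2 K, ζ i k) :
    ∑ q ∈ Finset.univ.filter (fun q : Fin M × Fin M => q.1 < q.2),
        |(z q.1 : ℝ) - (z q.2 : ℝ)| =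
      ∑ i : Fin M, ((2 * ((i : ℕ) + 1) : ℝ) - M - 1) * ∑ k ∈ Finset.Icc 2 K, (x i k : ℝ) := by
  -- rows are antitone in k on [2, K]
  have hanti : ∀ i : Fin M, ∀ k k' : ℕ, 2 ≤ k → k ≤ k' → k' ≤ K → ζ i k' ≤ ζ i k := by
    intro i k k' h2 hkk'
    induction k', hkk' using Nat.le_induction with
    | base => intro _; exact le_refl _
    | succ n hn ih =>
      intro hK'
      have h1 : ζ i (n + 1) ≤ ζ i n := hnest i n (by rw [Finset.mem_Icc]; omega)
      exact h1.trans (ih (by omega))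
  -- any two rows are pointwise comparable
  have hcomp : ∀ i j : Fin M,
      (∀ k ∈ Finset.Icc 2 K, ζ i k ≤ ζ j k) ∨ (∀ k ∈ Finset.Icc 2 K, ζ j k ≤ ζ i k) := by
    intro i j
    by_contra hc
    push_neg at hc
    obtain ⟨⟨k1, hk1, h1⟩, k2, hk2, h2⟩ := hc
    have hk1' := Finset.mem_Icc.mp hk1
    have hk2' := Finset.mem_Icc.mp hk2
    have b1 := hζ01 i k1 hk1
    have b2 := hζ01 j k1 hk1
    have b3 := hζ01 i k2 hk2
    have b4 := hζ01 j k2 hk2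
    rcases le_total k1 k2 with h | h
    · have a1 := hanti i k1 k2 hk1'.1 h hk2'.2
      have a2 := hanti j k1 k2 hk1'.1 h hk2'.2
      omega
    · have a1 := hanti i k2 k1 hk2'.1 h hk1'.2
      have a2 := hanti j k2 k1 hk2'.1 h hk1'.2
      omega
  -- |z_i - z_j| splits over k
  have hzabs : ∀ q ∈ Finset.univ.filter (fun q : Fin M × Fin M => q.1 < q.2),
      |(z q.1 : ℝ) - (z q.2 : ℝ)|
        = ∑ k ∈ Finset.Icc 2 K, |(ζ q.1 k : ℝ) - (ζ q.2 k : ℝ)| := by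
    intro q _
    have h1 : (z q.1 : ℝ) - (z q.2 : ℝ)
        = ∑ k ∈ Finset.Icc 2 K, (ζ q.1 k : ℝ) - ∑ k ∈ Finset.Icc 2 K, (ζ q.2 k : ℝ) := by
      rw [hz q.1, hz q.2]; push_cast; ring
    rw [h1]
    refine abs_sum_sub _ _ _ ?_
    rcases hcomp q.1 q.2 with h | h
    · exact Or.inl fun k hk => Nat.cast_le.mpr (h k hk)
    · exact Or.inr fun k hk => Nat.cast_le.mpr (h k hk)
  -- per-column identity for x
  have hxcol : ∀ k ∈ Finset.Icc 2 K,
      ∑ i : Fin M, ((2 * ((i : ℕ) + 1) : ℝ) - M - 1) * (x i k : ℝ)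
        = (∑ q : Fin M × Fin M, |(ζ q.1 k : ℝ) - (ζ q.2 k : ℝ)|) / 2 := by
    intro k hk
    obtain ⟨⟨σ, hσ⟩, hmono⟩ := hx k hk
    have hwm : Monotone fun i : Fin M => (x i k : ℝ) :=
      fun a b hab => Nat.cast_le.mpr (hmono hab)
    rw [← mono_pairsum _ hwm,
      sum_pairs (fun q => |(x q.1 k : ℝ) - (x q.2 k : ℝ)|)
        (fun q => by simp [abs_sub_comm]) (fun i => by simp)]
    congr 1
    have hxi : ∀ i, x i k = ζ (σ i) k := fun i => congrFun hσ i
    calc ∑ q : Fin M × Fin M, |(x q.1 k : ℝ) - (x q.2 k : ℝ)|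
        = ∑ q : Fin M × Fin M, |(ζ (σ q.1) k : ℝ) - (ζ (σ q.2) k : ℝ)| := by
          refine Finset.sum_congr rfl fun q _ => ?_; rw [hxi q.1, hxi q.2]
      _ = ∑ q : Fin M × Fin M, |(ζ q.1 k : ℝ) - (ζ q.2 k : ℝ)| :=
          Equiv.sum_comp (σ.prodCongr σ)
            (fun q : Fin M × Fin M => |(ζ q.1 k : ℝ) - (ζ q.2 k : ℝ)|)
  calc ∑ q ∈ Finset.univ.filter (fun q : Fin M × Fin M => q.1 < q.2),
        |(z q.1 : ℝ) - (z q.2 : ℝ)|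
      = ∑ q ∈ Finset.univ.filter (fun q : Fin M × Fin M => q.1 < q.2),
          ∑ k ∈ Finset.Icc 2 K, |(ζ q.1 k : ℝ) - (ζ q.2 k : ℝ)| :=
        Finset.sum_congr rfl hzabs
    _ = ∑ k ∈ Finset.Icc 2 K,
          ∑ q ∈ Finset.univ.filter (fun q : Fin M × Fin M => q.1 < q.2),
            |(ζ q.1 k : ℝ) - (ζ q.2 k : ℝ)| := Finset.sum_comm
    _ = ∑ k ∈ Finset.Icc 2 K,
          (∑ q : Fin M × Fin M, |(ζ q.1 k : ℝ) - (ζ q.2 k : ℝ)|) / 2 := by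
        refine Finset.sum_congr rfl fun k _ => ?_
        exact sum_pairs (fun q => |(ζ q.1 k : ℝ) - (ζ q.2 k : ℝ)|)
          (fun q => by simp [abs_sub_comm]) (fun i => by simp)
    _ = ∑ k ∈ Finset.Icc 2 K,
          ∑ i : Fin M, ((2 * ((i : ℕ) + 1) : ℝ) - M - 1) * (x i k : ℝ) :=
        (Finset.sum_congr rfl fun k hk => (hxcol k hk).symm)
    _ = ∑ i : Fin M, ((2 * ((i : ℕ) + 1) : ℝ) - M - 1) * ∑ k ∈ Finset.Icc 2 K, (x i k : ℝ) := by
        rw [Finset.sum_comm]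
        exact Finset.sum_congr rfl fun i _ => (Finset.mul_sum _ _ _).symm
end

section
/- For any z ∈ ℝ^M and any k with 2 ≤ k ≤ M, the sum of the M−k+1 largest entries of z equals max over subsets S ⊆ {1,…,M} with |S| = M−k+1 of ∑_{i∈S} z_i; consequently, in the optimization problem min { 2∑_{k=2}^M θ_k − (M−1)∑_i z_i : θ_k ≥ ∑_{i∈S} z_i for all S with |S| = M−k+1 } over θ ∈ ℝ^{M−1}, the optimal value equals ∑_{1≤i<j≤M} |z_i − z_j|. -/
/-!
If `w = z ∘ σ` is non-increasing, any `m`-subset of indices, listed increasingly, has its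
`j`-th element at position `≥ j`, so its `w`-sum is at most the sum of the first `m` entries of
`w`; those entries are the values of `z` on an `m`-subset. Hence the optimal `θ_k` is the
prefix sum of length `M - k + 1`. Counting how often each `w i` occurs, the objective becomes
`∑ i, (M - 1 - 2 i) w i = ∑_{i<j} (w i - w j)`, which is the sum of `|z i - z j|` over pairs
because that sum is half the (permutation invariant) sum over all ordered pairs.
-/

open Finset

def prefixSum {M : ℕ} {α : Type*} [AddCommMonoid α] (w : Fin M → α) (m : ℕ) : α :=
  ∑ i ∈ univ.filter (fun i : Fin M => (i : ℕ) < m), w i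

theorem Fin.val_le_of_strictMono {m M : ℕ} {f : Fin m → Fin M} (hf : StrictMono f)
    (j : Fin m) : (j : ℕ) ≤ f j := by
  have h : #((Iic j).image f) ≤ #(Iic (f j)) :=
    card_le_card fun x hx => by
      obtain ⟨i, hi, rfl⟩ := mem_image.1 hx
      exact mem_Iic.2 (hf.monotone (mem_Iic.1 hi))
  rw [card_image_of_injective _ hf.injective, Fin.card_Iic, Fin.card_Iic] at h
  omega

theorem prefixSum_eq_sum_castLE {M m : ℕ} {α : Type*} [AddCommMonoid α] (w : Fin M → α)
    (hm : m ≤ M) : prefixSum w m = ∑ j : Fin m, w (Fin.castLE hm j) := by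
  have h : univ.filter (fun i : Fin M => (i : ℕ) < m) = univ.map (Fin.castLEEmb hm) := by
    ext i
    simp only [mem_filter, mem_univ, true_and, mem_map, Fin.castLEEmb_apply]
    exact ⟨fun hi => ⟨⟨i, hi⟩, rfl⟩, by rintro ⟨j, rfl⟩; exact j.isLt⟩
  rw [prefixSum, h, sum_map]
  rfl

theorem sum_le_prefixSum_of_antitone {M : ℕ} {α : Type*} [AddCommMonoid α] [PartialOrder α]
    [IsOrderedAddMonoid α] {w : Fin M → α} (hw : Antitone w) (S : Finset (Fin M)) :
    ∑ i ∈ S, w i ≤ prefixSum w #S := by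
  have hS : #S ≤ M := by simpa using card_le_univ S
  conv_lhs => rw [← S.map_orderEmbOfFin_univ rfl, sum_map]
  rw [prefixSum_eq_sum_castLE w hS]
  exact sum_le_sum fun j _ =>
    hw (Fin.le_def.2 (Fin.val_le_of_strictMono (S.orderEmbOfFin rfl).strictMono j))

theorem isGreatest_prefixSum_comp_perm {M m : ℕ} {α : Type*} [AddCommMonoid α] [PartialOrder α]
    [IsOrderedAddMonoid α] (z : Fin M → α) (σ : Equiv.Perm (Fin M)) (hanti : Antitone (z ∘ σ))
    (hm : m ≤ M) :
    IsGreatest {v | ∃ S : Finset (Fin M), #S = m ∧ v = ∑ i ∈ S, z i} (prefixSum (z ∘ σ) m) := by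
  constructor
  · refine ⟨(univ.filter fun i : Fin M => (i : ℕ) < m).map σ.toEmbedding, ?_, ?_⟩
    · rw [card_map, Fin.card_filter_val_lt, min_eq_right hm]
    · rw [sum_map]
      rfl
  · rintro v ⟨S, rfl, rfl⟩
    simpa using sum_le_prefixSum_of_antitone hanti (S.map σ.symm.toEmbedding)

theorem sum_eq_two_nsmul_sum_filter_lt {ι β : Type*} [Fintype ι] [LinearOrder ι]
    [AddCommMonoid β] (f : ι → ι → β) (hsymm : ∀ i j, f i j = f j i) (hdiag : ∀ i, f i i = 0) :
    ∑ i, ∑ j, f i j = 2 • ∑ q ∈ univ.filter (fun q : ι × ι => q.1 < q.2), f q.1 q.2 := by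
  have hsplit : ∀ i j, f i j = (if i < j then f i j else 0) + (if j < i then f j i else 0) := by
    intro i j
    rcases lt_trichotomy i j with h | rfl | h
    · simp [h, h.not_gt]
    · simp [hdiag]
    · simp [h, h.not_gt, hsymm i j]
  rw [sum_filter, Fintype.sum_prod_type, two_nsmul]
  calc ∑ i, ∑ j, f i j
      = ∑ i, ∑ j, ((if i < j then f i j else 0) + (if j < i then f j i else 0)) :=
        sum_congr rfl fun i _ => sum_congr rfl fun j _ => hsplit i j
    _ = _ := by
        simp only [sum_add_distrib]
        rw [sum_comm (f := fun i j => if j < i then f j i else 0)]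

theorem sum_filter_lt_abs_sub_comp_perm {ι : Type*} [Fintype ι] [LinearOrder ι]
    (z : ι → ℝ) (σ : Equiv.Perm ι) :
    ∑ q ∈ univ.filter (fun q : ι × ι => q.1 < q.2), |z (σ q.1) - z (σ q.2)| =
      ∑ q ∈ univ.filter (fun q : ι × ι => q.1 < q.2), |z q.1 - z q.2| := by
  have h := sum_eq_two_nsmul_sum_filter_lt (fun i j => |z i - z j|)
    (fun i j => abs_sub_comm _ _) (fun i => by simp)
  have hσ := sum_eq_two_nsmul_sum_filter_lt (fun i j => |z (σ i) - z (σ j)|)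
    (fun i j => abs_sub_comm _ _) (fun i => by simp)
  have hperm : ∑ i, ∑ j, |z (σ i) - z (σ j)| = ∑ i, ∑ j, |z i - z j| := by
    rw [Equiv.sum_comp σ (fun i => ∑ j, |z i - z (σ j)|)]
    exact sum_congr rfl fun i _ => Equiv.sum_comp σ (fun j => |z i - z j|)
  rw [hperm, h] at hσ
  exact (nsmul_right_injective two_ne_zero hσ).symm

theorem Fin.cast_sub_one_sub_val {M : ℕ} {R : Type*} [Ring R] (i : Fin M) :
    ((M - 1 - i : ℕ) : R) = M - 1 - i := by
  have hi := i.isLt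
  rw [Nat.cast_sub (by omega), Nat.cast_sub (by omega), Nat.cast_one]

theorem sum_filter_lt_sub {M : ℕ} {R : Type*} [CommRing R] (w : Fin M → R) :
    ∑ q ∈ univ.filter (fun q : Fin M × Fin M => q.1 < q.2), (w q.1 - w q.2) =
      ∑ i, ((M : R) - 1 - 2 * i) * w i := by
  have hsplit : ∀ i j : Fin M, (if i < j then w i - w j else 0) =
      (if i < j then w i else 0) - (if i < j then w j else 0) := by
    intro i j; split_ifs <;> simp
  simp_rw [sum_filter, Fintype.sum_prod_type, hsplit, sum_sub_distrib]
  rw [sum_comm (f := fun i j : Fin M => if i < j then w j else 0), ← sum_sub_distrib]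
  refine sum_congr rfl fun i _ => ?_
  rw [← sum_filter, ← sum_filter, sum_const, sum_const, filter_lt_eq_Ioi,
    filter_gt_eq_Iio, Fin.card_Ioi, Fin.card_Iio, nsmul_eq_mul, nsmul_eq_mul,
    Fin.cast_sub_one_sub_val]
  ring

theorem sum_Icc_prefixSum {M : ℕ} {R : Type*} [CommRing R] (w : Fin M → R) :
    ∑ k ∈ Icc 2 M, prefixSum w (M - k + 1) = ∑ i, ((M : R) - 1 - i) * w i := by
  simp_rw [prefixSum, sum_filter]
  rw [sum_comm]
  refine sum_congr rfl fun i _ => ?_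
  have hk : (Icc 2 M).filter (fun k => (i : ℕ) < M - k + 1) = Icc 2 (M - i) := by
    ext k; simp only [mem_filter, mem_Icc]; omega
  rw [← sum_filter, hk, sum_const, Nat.card_Icc, nsmul_eq_mul,
    show M - i + 1 - 2 = M - 1 - i by omega, Fin.cast_sub_one_sub_val]

theorem two_mul_sum_prefixSum_sub_of_antitone {M : ℕ} {w : Fin M → ℝ} (hw : Antitone w) :
    2 * ∑ k ∈ Icc 2 M, prefixSum w (M - k + 1) - ((M : ℝ) - 1) * ∑ i, w i =
      ∑ q ∈ univ.filter (fun q : Fin M × Fin M => q.1 < q.2), |w q.1 - w q.2| := by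
  have habs : ∀ q ∈ univ.filter (fun q : Fin M × Fin M => q.1 < q.2),
      |w q.1 - w q.2| = w q.1 - w q.2 := fun q hq =>
    abs_of_nonneg (sub_nonneg.2 (hw (mem_filter.1 hq).2.le))
  rw [sum_congr rfl habs, sum_filter_lt_sub, sum_Icc_prefixSum, mul_sum, mul_sum,
    ← sum_sub_distrib]
  exact sum_congr rfl fun i _ => by ring

theorem two_mul_sum_prefixSum_sub_comp_perm {M : ℕ} (z : Fin M → ℝ) (σ : Equiv.Perm (Fin M))
    (hanti : Antitone (z ∘ σ)) :
    2 * ∑ k ∈ Icc 2 M, prefixSum (z ∘ σ) (M - k + 1) - ((M : ℝ) - 1) * ∑ i, z i =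
      ∑ q ∈ univ.filter (fun q : Fin M × Fin M => q.1 < q.2), |z q.1 - z q.2| := by
  rw [← Equiv.sum_comp σ z, ← sum_filter_lt_abs_sub_comp_perm z σ]
  exact two_mul_sum_prefixSum_sub_of_antitone hanti

theorem stmt_14_general (M : ℕ) (z w : Fin M → ℝ) (σ : Equiv.Perm (Fin M))
    (hw : w = z ∘ σ) (hanti : Antitone w) :
    (∀ k ∈ Finset.Icc 2 M,
      IsGreatest {v : ℝ | ∃ S : Finset (Fin M), S.card = M - k + 1 ∧ v = ∑ i ∈ S, z i}
        (∑ i ∈ Finset.univ.filter (fun i : Fin M => (i : ℕ) < M - k + 1), w i)) ∧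
    IsLeast
      {v : ℝ | ∃ θ : ℕ → ℝ,
        (∀ k ∈ Finset.Icc 2 M, ∀ S : Finset (Fin M), S.card = M - k + 1 →
          ∑ i ∈ S, z i ≤ θ k) ∧
        v = 2 * ∑ k ∈ Finset.Icc 2 M, θ k - ((M : ℝ) - 1) * ∑ i : Fin M, z i}
      (∑ q ∈ Finset.univ.filter (fun q : Fin M × Fin M => q.1 < q.2), |z q.1 - z q.2|) := by
  subst hw
  have hmax : ∀ k ∈ Icc 2 M, IsGreatest {v | ∃ S : Finset (Fin M), #S = M - k + 1 ∧
      v = ∑ i ∈ S, z i} (prefixSum (z ∘ σ) (M - k + 1)) := fun k hk =>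
    isGreatest_prefixSum_comp_perm z σ hanti (by have := mem_Icc.1 hk; omega)
  refine ⟨hmax, ⟨fun k => prefixSum (z ∘ σ) (M - k + 1), fun k hk S hS => ?_, ?_⟩, ?_⟩
  · exact (hmax k hk).2 ⟨S, hS, rfl⟩
  · exact (two_mul_sum_prefixSum_sub_comp_perm z σ hanti).symm
  · rintro v ⟨θ, hθ, rfl⟩
    have hle : ∀ k ∈ Icc 2 M, prefixSum (z ∘ σ) (M - k + 1) ≤ θ k := fun k hk => by
      obtain ⟨S, hS, hsum⟩ := (hmax k hk).1
      exact hsum ▸ hθ k hk S hS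
    rw [← two_mul_sum_prefixSum_sub_comp_perm z σ hanti]
    linarith [sum_le_sum hle]

/-- (F5.2) correctness: for each `k = 2,…,M`, the sum of the `M-k+1` largest entries of
`z` (read off a non-increasing rearrangement `w`) is the maximum subset sum over subsets
of cardinality `M-k+1`; and the minimum of `2∑_{k=2}^M θ_k - (M-1)∑_i z_i` over all `θ`
satisfying the subset constraints equals `∑_{i<j} |z_i - z_j|`. -/
theorem stmt_14 (M : ℕ) (hM : 2 ≤ M) (z w : Fin M → ℝ) (σ : Equiv.Perm (Fin M))
    (hw : w = z ∘ σ) (hanti : Antitone w) :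
    (∀ k ∈ Finset.Icc 2 M,
      IsGreatest {v : ℝ | ∃ S : Finset (Fin M), S.card = M - k + 1 ∧ v = ∑ i ∈ S, z i}
        (∑ i ∈ Finset.univ.filter (fun i : Fin M => (i : ℕ) < M - k + 1), w i)) ∧
    IsLeast
      {v : ℝ | ∃ θ : ℕ → ℝ,
        (∀ k ∈ Finset.Icc 2 M, ∀ S : Finset (Fin M), S.card = M - k + 1 →
          ∑ i ∈ S, z i ≤ θ k) ∧
        v = 2 * ∑ k ∈ Finset.Icc 2 M, θ k - ((M : ℝ) - 1) * ∑ i : Fin M, z i}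
      (∑ q ∈ Finset.univ.filter (fun q : Fin M × Fin M => q.1 < q.2), |z q.1 - z q.2|) :=
  stmt_14_general M z w σ hw hanti
end

section
/- Let O_{i·} : A → {1,…,M} be a bijection for each i ∈ A = {1,…,M} and 1 ≤ p ≤ M. The minimum over all subsets Y ⊆ A with |Y| = p of ∑_{1≤i<j≤M} | min_{ℓ∈Y} O_{iℓ} − min_{ℓ∈Y} O_{jℓ} | equals the optimal value of the mixed-integer program (F1): minimize ∑_{i<j} e_{ij} subject to e_{ij} ≥ z_i − z_j, e_{ij} ≥ z_j − z_i, the closest-assignment constraints z_i + ∑_{ℓ: O_{iℓ} ≤ k−1}(k − O_{iℓ}) y_ℓ ≥ k for all i and k = 1,…,M−p+1, z_i + (M−p+1−O_{ik}) y_k ≤ M−p+1 for all i,k with O_{ik} ≤ M−p, ∑_j y_j = p, and y ∈ {0,1}^M. -/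
/-!
Write `r_i(Y)` for the rank, in customer `i`'s preference, of the best open facility, and encode
`Y` by its indicator `y`. On a feasible point of (F1) the variable `z_i` is squeezed: the lower
closest-assignment constraint at `k = r_i(Y)` has an empty sum and gives `r_i(Y) ≤ z_i`, while the
upper one at the best open facility gives `z_i ≤ r_i(Y)` as soon as `r_i(Y) ≤ M - p`. Since `p`
distinct ranks are at least `r_i(Y)`, always `r_i(Y) ≤ M - p + 1`, so `min z_i (M - p + 1) = r_i(Y)`.
Truncation at a constant is `1`-Lipschitz, hence `e_ij ≥ |z_i - z_j| ≥ |r_i(Y) - r_j(Y)|` and every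
feasible point costs at least the envy of the set it opens. Conversely `z_i = r_i(Y)`,
`e_ij = |z_i - z_j|` is feasible and costs exactly the envy of `Y`.
-/

open Finset

variable {α : Type*}

/-- Junk value `0` when `Y = ∅`. -/
noncomputable def closestRank (o : α → ℕ) (Y : Finset α) : ℕ :=
  sInf {r | ∃ ℓ ∈ Y, o ℓ = r}

noncomputable def envy {ι : Type*} [Fintype ι] [LinearOrder ι] (O : ι → α → ℕ)
    (Y : Finset α) : ℝ :=
  ∑ q ∈ univ.filter (fun q : ι × ι => q.1 < q.2),
    |(closestRank (O q.1) Y : ℝ) - closestRank (O q.2) Y|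

section ClosestRank

variable (o : α → ℕ) {Y : Finset α}

lemma closestRank_le {ℓ : α} (hℓ : ℓ ∈ Y) : closestRank o Y ≤ o ℓ :=
  Nat.sInf_le ⟨ℓ, hℓ, rfl⟩

lemma exists_eq_closestRank (hY : Y.Nonempty) : ∃ ℓ ∈ Y, o ℓ = closestRank o Y :=
  let ⟨ℓ, hℓ⟩ := hY
  Nat.sInf_mem (s := {r | ∃ ℓ ∈ Y, o ℓ = r}) ⟨o ℓ, ℓ, hℓ, rfl⟩

lemma closestRank_add_card_le {M : ℕ} (hY : Y.Nonempty) (hinj : Set.InjOn o Y)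
    (ho : ∀ ℓ ∈ Y, o ℓ ≤ M) : closestRank o Y + #Y ≤ M + 1 := by
  classical
  have hsub : Y.image o ⊆ Icc (closestRank o Y) M := by
    rintro _ hr
    obtain ⟨ℓ, hℓ, rfl⟩ := mem_image.1 hr
    exact mem_Icc.2 ⟨closestRank_le o hℓ, ho ℓ hℓ⟩
  have hcard := card_le_card hsub
  rw [card_image_of_injOn hinj, Nat.card_Icc] at hcard
  have := card_pos.2 hY
  omega

lemma closestRank_mem_Icc {M p : ℕ} (ho : Set.BijOn o Set.univ (Set.Icc 1 M))
    (hp : 1 ≤ p) (hY : #Y = p) : closestRank o Y ∈ Icc 1 (M - p + 1) := by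
  have hYne : Y.Nonempty := card_pos.1 (by omega)
  have hrange : ∀ ℓ, o ℓ ∈ Set.Icc 1 M := fun ℓ => ho.mapsTo (Set.mem_univ ℓ)
  obtain ⟨ℓ, -, hℓ⟩ := exists_eq_closestRank o hYne
  have hone : 1 ≤ closestRank o Y := hℓ ▸ (hrange ℓ).1
  have hle := closestRank_add_card_le o hYne (ho.injOn.mono (Set.subset_univ _))
    (fun ℓ _ => (hrange ℓ).2)
  exact mem_Icc.2 ⟨hone, by omega⟩

variable [DecidableEq α]

lemma closestRank_add_mul_ite_le {c : ℝ} (hc : (closestRank o Y : ℝ) ≤ c) (k : α) :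
    closestRank o Y + (c - o k) * ((if k ∈ Y then 1 else 0 : ℕ) : ℝ) ≤ c := by
  split_ifs with hk
  · have : (closestRank o Y : ℝ) ≤ o k := by exact_mod_cast closestRank_le o hk
    simp only [Nat.cast_one, mul_one]
    linarith
  · simpa using hc

variable [Fintype α]

lemma sum_ite_eq_zero_of_le_closestRank {k : ℕ} (hk : k ≤ closestRank o Y) :
    ∑ ℓ ∈ univ.filter (fun ℓ => o ℓ ≤ k - 1),
      ((k : ℝ) - o ℓ) * ((if ℓ ∈ Y then 1 else 0 : ℕ) : ℝ) = 0 := by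
  refine sum_eq_zero fun ℓ hℓ => ?_
  split_ifs with hℓY
  · have hok : o ℓ = k := by
      have := closestRank_le o hℓY
      have := (mem_filter.1 hℓ).2
      omega
    simp [hok]
  · simp

lemma sub_closestRank_le_sum_ite (hY : Y.Nonempty) {k : ℕ} (hk : closestRank o Y < k) :
    (k : ℝ) - closestRank o Y ≤ ∑ ℓ ∈ univ.filter (fun ℓ => o ℓ ≤ k - 1),
      ((k : ℝ) - o ℓ) * ((if ℓ ∈ Y then 1 else 0 : ℕ) : ℝ) := by
  obtain ⟨ℓ₀, hℓ₀, hr⟩ := exists_eq_closestRank o hY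
  have hmem : ℓ₀ ∈ univ.filter (fun ℓ => o ℓ ≤ k - 1) := mem_filter.2 ⟨mem_univ _, by omega⟩
  have hnonneg : ∀ ℓ ∈ univ.filter (fun ℓ => o ℓ ≤ k - 1),
      0 ≤ ((k : ℝ) - o ℓ) * ((if ℓ ∈ Y then 1 else 0 : ℕ) : ℝ) := by
    intro ℓ hℓ
    have : o ℓ ≤ k := (mem_filter.1 hℓ).2.trans (Nat.sub_le k 1)
    exact mul_nonneg (sub_nonneg.2 (by exact_mod_cast this)) (Nat.cast_nonneg _)
  calc (k : ℝ) - closestRank o Y = ((k : ℝ) - o ℓ₀) * ((if ℓ₀ ∈ Y then 1 else 0 : ℕ) : ℝ) := by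
        simp [hℓ₀, hr]
    _ ≤ _ := single_le_sum hnonneg hmem

lemma le_closestRank_add_sum_ite (hY : Y.Nonempty) (k : ℕ) :
    (k : ℝ) ≤ closestRank o Y + ∑ ℓ ∈ univ.filter (fun ℓ => o ℓ ≤ k - 1),
      ((k : ℝ) - o ℓ) * ((if ℓ ∈ Y then 1 else 0 : ℕ) : ℝ) := by
  rcases le_or_gt k (closestRank o Y) with hk | hk
  · rw [sum_ite_eq_zero_of_le_closestRank o hk, add_zero]
    exact_mod_cast hk
  · linarith [sub_closestRank_le_sum_ite o hY hk]

lemma min_eq_closestRank (hY : Y.Nonempty) {m : ℕ} (hr : closestRank o Y ∈ Icc 1 (m + 1))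
    {z : ℝ}
    (hlow : ∀ k ∈ Icc 1 (m + 1), (k : ℝ) ≤ z + ∑ ℓ ∈ univ.filter (fun ℓ => o ℓ ≤ k - 1),
      ((k : ℝ) - o ℓ) * ((if ℓ ∈ Y then 1 else 0 : ℕ) : ℝ))
    (hup : ∀ k, o k ≤ m → z + ((m : ℝ) + 1 - o k) * ((if k ∈ Y then 1 else 0 : ℕ) : ℝ) ≤ m + 1) :
    min z (m + 1) = closestRank o Y := by
  have hle_z : (closestRank o Y : ℝ) ≤ z := by
    have := hlow _ hr
    rwa [sum_ite_eq_zero_of_le_closestRank o le_rfl, add_zero] at this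
  have hle_m : (closestRank o Y : ℝ) ≤ m + 1 := by exact_mod_cast (mem_Icc.1 hr).2
  refine le_antisymm ?_ (le_min hle_z hle_m)
  by_cases hm : closestRank o Y ≤ m
  · obtain ⟨ℓ, hℓ, hℓr⟩ := exists_eq_closestRank o hY
    have hzℓ := hup ℓ (hℓr ▸ hm)
    rw [hℓr, if_pos hℓ, Nat.cast_one, mul_one] at hzℓ
    exact min_le_of_left_le (by linarith)
  · have : closestRank o Y = m + 1 := by have := (mem_Icc.1 hr).2; omega
    exact min_le_of_right_le (by exact_mod_cast this.ge)

lemma exists_eq_ite_mem_of_binary {y : α → ℕ} (hy : ∀ j, y j = 0 ∨ y j = 1) :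
    ∃ Y : Finset α, y = fun ℓ => if ℓ ∈ Y then 1 else 0 :=
  ⟨univ.filter (y · = 1), funext fun ℓ => by rcases hy ℓ with h | h <;> simp [h]⟩

end ClosestRank

structure IsF1Feasible (M p : ℕ) (O : Fin M → Fin M → ℕ) (e : Fin M → Fin M → ℝ)
    (z : Fin M → ℝ) (y : Fin M → ℕ) : Prop where
  envy_ge : ∀ i j : Fin M, i < j → z i - z j ≤ e i j ∧ z j - z i ≤ e i j
  closest_lower : ∀ i : Fin M, ∀ k ∈ Finset.Icc 1 (M - p + 1),
    (k : ℝ) ≤ z i + ∑ ℓ ∈ Finset.univ.filter (fun ℓ : Fin M => O i ℓ ≤ k - 1),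
      ((k : ℝ) - O i ℓ) * y ℓ
  closest_upper : ∀ i k : Fin M, O i k ≤ M - p →
    z i + ((M : ℝ) - p + 1 - O i k) * y k ≤ (M : ℝ) - p + 1
  binary : ∀ j, y j = 0 ∨ y j = 1
  sum_eq : ∑ j : Fin M, y j = p

section F1

variable {M p : ℕ} {O : Fin M → Fin M → ℕ}

lemma exists_isF1Feasible_sum_eq_envy (hp : 1 ≤ p) (hpM : p ≤ M)
    (hO : ∀ i, Set.BijOn (O i) Set.univ (Set.Icc 1 M)) {Y : Finset (Fin M)} (hY : #Y = p) :
    ∃ e z y, IsF1Feasible M p O e z y ∧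
      ∑ q ∈ univ.filter (fun q : Fin M × Fin M => q.1 < q.2), e q.1 q.2 = envy O Y := by
  have hYne : Y.Nonempty := card_pos.1 (by omega)
  refine ⟨fun i j => |(closestRank (O i) Y : ℝ) - closestRank (O j) Y|,
    fun i => closestRank (O i) Y, fun ℓ => if ℓ ∈ Y then 1 else 0, ⟨?_, ?_, ?_, ?_, ?_⟩, rfl⟩
  · exact fun i j _ => ⟨le_abs_self _, abs_sub_comm (α := ℝ) _ _ ▸ le_abs_self _⟩
  · exact fun i k _ => le_closestRank_add_sum_ite (O i) hYne k
  · intro i k _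
    refine closestRank_add_mul_ite_le (O i) ?_ k
    have := (mem_Icc.1 (closestRank_mem_Icc (O i) (hO i) hp hY)).2
    rw [← Nat.cast_sub hpM]
    exact_mod_cast this
  · intro j
    by_cases h : j ∈ Y <;> simp [h]
  · simpa using hY

lemma IsF1Feasible.exists_envy_le (hp : 1 ≤ p) (hpM : p ≤ M)
    (hO : ∀ i, Set.BijOn (O i) Set.univ (Set.Icc 1 M)) {e : Fin M → Fin M → ℝ}
    {z : Fin M → ℝ} {y : Fin M → ℕ} (h : IsF1Feasible M p O e z y) :
    ∃ Y : Finset (Fin M), #Y = p ∧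
      envy O Y ≤ ∑ q ∈ univ.filter (fun q : Fin M × Fin M => q.1 < q.2), e q.1 q.2 := by
  obtain ⟨Y, rfl⟩ := exists_eq_ite_mem_of_binary h.binary
  have hY : #Y = p := by simpa using h.sum_eq
  have hYne : Y.Nonempty := card_pos.1 (by omega)
  have hcast : (M : ℝ) - p = ((M - p : ℕ) : ℝ) := (Nat.cast_sub hpM).symm
  have hmin : ∀ i, min (z i) ((M - p : ℕ) + 1) = closestRank (O i) Y := fun i =>
    min_eq_closestRank (O i) hYne (closestRank_mem_Icc (O i) (hO i) hp hY) (h.closest_lower i)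
      (fun k hk => by simpa only [hcast] using h.closest_upper i k hk)
  refine ⟨Y, hY, sum_le_sum fun q hq => ?_⟩
  obtain ⟨h₁, h₂⟩ := h.envy_ge q.1 q.2 (mem_filter.1 hq).2
  calc |(closestRank (O q.1) Y : ℝ) - closestRank (O q.2) Y|
      = |min (z q.1) ((M - p : ℕ) + 1) - min (z q.2) ((M - p : ℕ) + 1)| := by rw [hmin, hmin]
    _ ≤ max |z q.1 - z q.2| |((M - p : ℕ) + 1 : ℝ) - ((M - p : ℕ) + 1)| :=
        abs_min_sub_min_le_max _ _ _ _
    _ = |z q.1 - z q.2| := by rw [sub_self, abs_zero, max_eq_left (abs_nonneg _)]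
    _ ≤ e q.1 q.2 := abs_sub_le_iff.2 ⟨h₁, h₂⟩

end F1

/-- Correctness of formulation (F1) for the minimum-envy `p`-location problem: the
combinatorial minimum total envy over all `p`-subsets `Y` of sites equals the optimal
value of the mixed-integer program (F1). -/
theorem stmt_15 (M p : ℕ) (hp1 : 1 ≤ p) (hpM : p ≤ M)
    (O : Fin M → Fin M → ℕ)
    (hO : ∀ i, Set.BijOn (O i) Set.univ (Set.Icc 1 M)) :
    sInf {v : ℝ | ∃ Y : Finset (Fin M), Y.card = p ∧
        v = ∑ q ∈ Finset.univ.filter (fun q : Fin M × Fin M => q.1 < q.2),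
          |((sInf {r : ℕ | ∃ ℓ ∈ Y, O q.1 ℓ = r} : ℕ) : ℝ) -
            ((sInf {r : ℕ | ∃ ℓ ∈ Y, O q.2 ℓ = r} : ℕ) : ℝ)|} =
    sInf {v : ℝ | ∃ (e : Fin M → Fin M → ℝ) (z : Fin M → ℝ) (y : Fin M → ℕ),
        (∀ i j : Fin M, i < j → z i - z j ≤ e i j ∧ z j - z i ≤ e i j) ∧
        (∀ i : Fin M, ∀ k ∈ Finset.Icc 1 (M - p + 1),
          (k : ℝ) ≤ z i + ∑ ℓ ∈ Finset.univ.filter (fun ℓ : Fin M => O i ℓ ≤ k - 1),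
            ((k : ℝ) - O i ℓ) * y ℓ) ∧
        (∀ i k : Fin M, O i k ≤ M - p →
          z i + ((M : ℝ) - p + 1 - O i k) * y k ≤ (M : ℝ) - p + 1) ∧
        (∀ j, y j = 0 ∨ y j = 1) ∧ (∑ j : Fin M, y j = p) ∧
        v = ∑ q ∈ Finset.univ.filter (fun q : Fin M × Fin M => q.1 < q.2), e q.1 q.2} := by
  refine csInf_eq_csInf_of_forall_exists_le ?_ ?_
  · rintro _ ⟨Y, hY, rfl⟩
    obtain ⟨e, z, y, ⟨h₁, h₂, h₃, h₄, h₅⟩, hval⟩ := exists_isF1Feasible_sum_eq_envy hp1 hpM hO hY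
    exact ⟨_, ⟨e, z, y, h₁, h₂, h₃, h₄, h₅, rfl⟩, hval.le⟩
  · rintro _ ⟨e, z, y, h₁, h₂, h₃, h₄, h₅, rfl⟩
    obtain ⟨Y, hY, hle⟩ := IsF1Feasible.exists_envy_le hp1 hpM hO ⟨h₁, h₂, h₃, h₄, h₅⟩
    exact ⟨_, ⟨Y, hY, rfl⟩, hle⟩
end
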